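/- arXiv:1302.4889 — 4 statements merged into one kernel-verified Lean document; each statement's English description precedes it below -/
import Mathlib

section
/- Let F : ℝ → ℝ be twice differentiable, bounded below with infimum m, and suppose F''(x) ≤ M for all x, where M ≥ 0. Then for every x ∈ ℝ, |F'(x)| ≤ (1 + M/2) · √(F(x) − m). -/
/-!
Since `F'' ≤ M`, the function `y ↦ M/2 * y^2 - F y` is convex, so it lies above its tangent lines;
this is the Taylor bound `F (x + t) ≤ F x + F' x * t + M/2 * t^2`. As `F ≥ m`, the quadratic
`t ↦ M/2 * t^2 + F' x * t + (F x - m)` is nonnegative, so its discriminant gives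
`F' x ^ 2 ≤ 2 M (F x - m)`, and `2 M ≤ (1 + M/2)^2`.
-/

open Set

theorem ConvexOn.add_deriv_mul_sub_le {f : ℝ → ℝ} (hf : ConvexOn ℝ univ f) {x : ℝ}
    (hd : DifferentiableAt ℝ f x) (y : ℝ) : f x + deriv f x * (y - x) ≤ f y := by
  rcases lt_trichotomy x y with hxy | rfl | hyx
  · have h := hf.deriv_le_slope (mem_univ x) (mem_univ y) hxy hd
    rw [slope_def_field, le_div_iff₀ (sub_pos.2 hxy)] at h
    linarith
  · simp
  · have h := hf.slope_le_deriv (mem_univ y) (mem_univ x) hyx hd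
    rw [slope_def_field, div_le_iff₀ (sub_pos.2 hyx)] at h
    linarith

theorem le_add_deriv_mul_add_of_deriv2_le {F : ℝ → ℝ} {M : ℝ} (hF : Differentiable ℝ F)
    (hF' : Differentiable ℝ (deriv F)) (hF'' : ∀ x, deriv (deriv F) x ≤ M) (x t : ℝ) :
    F (x + t) ≤ F x + deriv F x * t + M / 2 * t ^ 2 := by
  set G : ℝ → ℝ := fun y => M / 2 * y ^ 2 - F y
  have hG : ∀ y, HasDerivAt G (M * y - deriv F y) y := fun y => by
    refine (((hasDerivAt_pow 2 y).const_mul (M / 2)).fun_sub (hF y).hasDerivAt).congr_deriv ?_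
    ring
  have hderivG : deriv G = fun y => M * y - deriv F y := funext fun y => (hG y).deriv
  have hG' : ∀ y, HasDerivAt (deriv G) (M - deriv (deriv F) y) y := fun y => by
    rw [hderivG]
    exact (hasDerivAt_const_mul M).fun_sub (hF' y).hasDerivAt
  have hconvex : ConvexOn ℝ univ G :=
    convexOn_univ_of_deriv2_nonneg (fun y => (hG y).differentiableAt)
      (fun y => (hG' y).differentiableAt)
      (fun y => by simpa [(hG' y).deriv] using hF'' y)
  have h := hconvex.add_deriv_mul_sub_le (hG x).differentiableAt (x + t)
  simp only [G, (hG x).deriv] at h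
  nlinarith

theorem abs_le_one_add_mul_sqrt_of_forall_quadratic_nonneg {a b c : ℝ} (hc : 0 ≤ c)
    (h : ∀ t, 0 ≤ c * (t * t) + b * t + a) : |b| ≤ (1 + c) * √a := by
  have ha : 0 ≤ a := by simpa using h 0
  have hdiscrim : b ^ 2 ≤ 4 * c * a := by
    have hneg := discrim_le_zero h
    rw [discrim] at hneg
    linarith
  refine abs_le_of_sq_le_sq ?_ (by positivity)
  rw [mul_pow, Real.sq_sqrt ha]
  nlinarith [sq_nonneg (1 - c)]

/-- Lemma 3.1 (core estimate): if `F` is twice differentiable, bounded below with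
infimum `m`, and `F'' ≤ M` everywhere with `M ≥ 0`, then
`|F'(x)| ≤ (1 + M/2) * √(F x - m)` for all `x`. -/
theorem stmt_0 (F : ℝ → ℝ) (M m : ℝ) (hM : 0 ≤ M)
    (hdiff : ∀ x, DifferentiableAt ℝ F x)
    (hdiff2 : ∀ x, DifferentiableAt ℝ (deriv F) x)
    (hglb : IsGLB (Set.range F) m)
    (hM2 : ∀ x, deriv (deriv F) x ≤ M) :
    ∀ x : ℝ, |deriv F x| ≤ (1 + M / 2) * Real.sqrt (F x - m) := by
  intro x
  refine abs_le_one_add_mul_sqrt_of_forall_quadratic_nonneg (by positivity) fun t => ?_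
  have hm : m ≤ F (x + t) := hglb.1 (mem_range_self _)
  have htaylor := le_add_deriv_mul_add_of_deriv2_le hdiff hdiff2 hM2 x t
  nlinarith
end

section
/- Let d > 0 and a, b, c ∈ ℝ, and let p(t) = a·t + b·t² + c·t³. Then the oscillation of p over the interval [−d, d], i.e. (sup over [−d,d] of p) − (inf over [−d,d] of p), is at least (1/4) · max{|a|·d, |b|·d², |c|·d³}. -/
/-- The oscillation of the cubic `p t = a t + b t² + c t³` over `[-d, d]`
is at least `(1/4) * max {|a| d, |b| d², |c| d³}`. -/
theorem stmt_1 (a b c d : ℝ) (hd : 0 < d) :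
    (1 / 4) * max (|a| * d) (max (|b| * d ^ 2) (|c| * d ^ 3)) ≤
      sSup ((fun t => a * t + b * t ^ 2 + c * t ^ 3) '' Set.Icc (-d) d) -
        sInf ((fun t => a * t + b * t ^ 2 + c * t ^ 3) '' Set.Icc (-d) d) := by
  set f : ℝ → ℝ := fun t => a * t + b * t ^ 2 + c * t ^ 3 with hf
  have hcont : Continuous f := by fun_prop
  have hcomp : IsCompact (f '' Set.Icc (-d) d) :=
    (isCompact_Icc).image hcont
  have hba : BddAbove (f '' Set.Icc (-d) d) := hcomp.bddAbove
  have hbb : BddBelow (f '' Set.Icc (-d) d) := hcomp.bddBelow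
  have key : ∀ x ∈ Set.Icc (-d) d, ∀ y ∈ Set.Icc (-d) d,
      f x - f y ≤ sSup (f '' Set.Icc (-d) d) - sInf (f '' Set.Icc (-d) d) := by
    intro x hx y hy
    exact sub_le_sub (le_csSup hba ⟨x, hx, rfl⟩) (csInf_le hbb ⟨y, hy, rfl⟩)
  have hmem : ∀ t : ℝ, -d ≤ t → t ≤ d → t ∈ Set.Icc (-d) d := fun t h1 h2 => ⟨h1, h2⟩
  have hd2 : d / 2 ∈ Set.Icc (-d) d := ⟨by linarith, by linarith⟩
  have hnd2 : -(d / 2) ∈ Set.Icc (-d) d := ⟨by linarith, by linarith⟩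
  have hdd : d ∈ Set.Icc (-d) d := ⟨by linarith, le_refl d⟩
  have hnd : -d ∈ Set.Icc (-d) d := ⟨le_refl _, by linarith⟩
  have h0 : (0 : ℝ) ∈ Set.Icc (-d) d := ⟨by linarith, by linarith⟩
  set O := sSup (f '' Set.Icc (-d) d) - sInf (f '' Set.Icc (-d) d) with hO
  have h1 := key d hdd (-d) hnd
  have h2 := key (-d) hnd d hdd
  have h3 := key (d / 2) hd2 (-(d / 2)) hnd2
  have h4 := key (-(d / 2)) hnd2 (d / 2) hd2
  have h5 := key d hdd 0 h0
  have h6 := key 0 h0 d hdd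
  have h7 := key (-d) hnd 0 h0
  have h8 := key 0 h0 (-d) hnd
  simp only [hf] at h1 h2 h3 h4 h5 h6 h7 h8
  ring_nf at h1 h2 h3 h4 h5 h6 h7 h8
  have hOnn : 0 ≤ O := by linarith
  have hgoal : max (|a| * d) (max (|b| * d ^ 2) (|c| * d ^ 3)) ≤ 4 * O := by
    apply max_le
    · rcases abs_cases a with ⟨ha, _⟩ | ⟨ha, _⟩ <;> rw [ha] <;> nlinarith
    apply max_le
    · rcases abs_cases b with ⟨hb, _⟩ | ⟨hb, _⟩ <;> rw [hb] <;> nlinarith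
    · rcases abs_cases c with ⟨hc, _⟩ | ⟨hc, _⟩ <;> rw [hc] <;> nlinarith
  linarith
end

section
/- Let m ≥ 3 and let J be the real symmetric m × m matrix with diagonal entries A_0, …, A_{m−1} ∈ ℝ, entries J_{i,i+1} = J_{i+1,i} = B_i for 0 ≤ i ≤ m−2, corner entries J_{0,m−1} = J_{m−1,0} = B_{m−1}, and all other entries zero, where B_i < 0 for every i. If J is positive semidefinite, then the (m−1) × (m−1) matrix J_{m−1} obtained from J by deleting the 0-th row and 0-th column (the tridiagonal matrix with diagonal A_1, …, A_{m−1} and off-diagonal entries B_1, …, B_{m−2}) is positive definite. -/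
/-!
A kernel vector of `J` vanishing at index `0` is the zero extension of an isotropic vector of
`J_{m-1}`, so it suffices to show that such a vector `x` is zero. Because the off-diagonal
entries of `J` are nonpositive, `|x|` has a quadratic form no larger than that of `x`, hence is
again in the kernel. Reading the equation `(J |x|)_i = 0` at a zero `x_i`, every term is
nonpositive, so `x` vanishes at every neighbour of `i` in the cycle; the zero at `0` therefore
propagates along `0, 1, …, m-1`.
-/

open scoped Matrix

namespace Matrix

variable {ι κ : Type*} [Fintype ι] [Fintype κ] {M : Matrix ι ι ℝ}

theorem abs_dotProduct_mulVec_abs_le (hoff : ∀ i j, i ≠ j → M i j ≤ 0) (x : ι → ℝ) :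
    |x| ⬝ᵥ M *ᵥ |x| ≤ x ⬝ᵥ M *ᵥ x := by
  simp only [dotProduct, mulVec, Finset.mul_sum, Pi.abs_apply]
  refine Finset.sum_le_sum fun i _ => Finset.sum_le_sum fun j _ => ?_
  obtain rfl | hij := eq_or_ne i j
  · rw [mul_left_comm, abs_mul_abs_self, mul_left_comm]
  · calc |x i| * (M i j * |x j|) = M i j * |x i * x j| := by rw [abs_mul]; ring
      _ ≤ M i j * (x i * x j) := mul_le_mul_of_nonpos_left (le_abs_self _) (hoff i j hij)
      _ = x i * (M i j * x j) := by ring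

namespace PosSemidef

variable (hM : M.PosSemidef) (hoff : ∀ i j, i ≠ j → M i j ≤ 0) {x : ι → ℝ}
include hM hoff

theorem mulVec_abs_eq_zero (hx : M *ᵥ x = 0) : M *ᵥ |x| = 0 := by
  have hq : |x| ⬝ᵥ M *ᵥ |x| = 0 :=
    le_antisymm (by simpa [hx] using abs_dotProduct_mulVec_abs_le hoff x)
      (by simpa using hM.dotProduct_mulVec_nonneg |x|)
  exact (hM.dotProduct_mulVec_zero_iff |x|).mp (by simpa using hq)

theorem apply_eq_zero_of_mulVec_eq_zero (hx : M *ᵥ x = 0) {i j : ι} (hi : x i = 0)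
    (hij : M i j ≠ 0) : x j = 0 := by
  have hrow : ∑ k, M i k * |x k| = 0 := congrFun (hM.mulVec_abs_eq_zero hoff hx) i
  have hnonpos : ∀ k ∈ Finset.univ, M i k * |x k| ≤ 0 := by
    intro k _
    obtain rfl | hik := eq_or_ne i k
    · simp [hi]
    · exact mul_nonpos_of_nonpos_of_nonneg (hoff i k hik) (abs_nonneg _)
  have := (Finset.sum_eq_zero_iff_of_nonpos hnonpos).mp hrow j (Finset.mem_univ j)
  simpa [hij] using this

end PosSemidef

theorem PosSemidef.posDef_submatrix_of_ker (hM : M.PosSemidef) {e : κ → ι}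
    (he : Function.Injective e)
    (hker : ∀ x, M *ᵥ x = 0 → (∀ i ∉ Set.range e, x i = 0) → x = 0) :
    (M.submatrix e e).PosDef := by
  have hsub := hM.submatrix e
  refine posDef_iff_dotProduct_mulVec.mpr ⟨hsub.1, fun v hv => ?_⟩
  set x := Function.extend e v 0
  have hxe : ∀ k, x (e k) = v k := he.extend_apply v 0
  have hx : ∀ i ∉ Set.range e, x i = 0 := fun i hi =>
    Function.extend_apply' _ _ _ (by simpa using hi)
  have hq : v ⬝ᵥ M.submatrix e e *ᵥ v = x ⬝ᵥ M *ᵥ x := by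
    refine Fintype.sum_of_injective e he _ _ (fun i hi => by simp [hx i hi]) fun k => ?_
    rw [hxe]
    congr 1
    exact Fintype.sum_of_injective e he _ _ (fun j hj => by simp [hx j hj]) fun l => by
      simp [hxe]
  refine (hsub.dotProduct_mulVec_nonneg v).lt_of_ne' fun h0 => hv ?_
  have hMx : M *ᵥ x = 0 := (hM.dotProduct_mulVec_zero_iff x).mp (by simpa [← hq] using h0)
  funext k
  rw [← hxe, hker x hMx hx, Pi.zero_apply, Pi.zero_apply]

end Matrix

theorem stmt_5_general (n : ℕ) (A B : Fin (n + 1) → ℝ) (hB : ∀ i, B i < 0)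
    (J : Matrix (Fin (n + 1)) (Fin (n + 1)) ℝ)
    (hJ : ∀ i j : Fin (n + 1), J i j =
      if i = j then A i
      else if (i.val + 1) % (n + 1) = j.val then B i
      else if (j.val + 1) % (n + 1) = i.val then B j
      else 0)
    (hpsd : J.PosSemidef) :
    (J.submatrix Fin.succ Fin.succ).PosDef := by
  have hoff : ∀ i j, i ≠ j → J i j ≤ 0 := by
    intro i j hij
    rw [hJ, if_neg hij]
    split_ifs <;> first | exact (hB _).le | exact le_rfl
  have hstep : ∀ i : Fin n, J i.castSucc i.succ ≠ 0 := by
    intro i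
    rw [hJ, if_neg Fin.castSucc_lt_succ.ne, if_pos (by simp [Nat.mod_eq_of_lt])]
    exact (hB _).ne
  refine hpsd.posDef_submatrix_of_ker (Fin.succ_injective n) fun x hx hx0 => funext fun k => ?_
  induction k using Fin.induction with
  | zero => exact hx0 0 (by simp)
  | succ i ih => exact hpsd.apply_eq_zero_of_mulVec_eq_zero hoff hx ih (hstep i)

/-- Periodic (cyclic) Jacobi matrix with negative couplings: for `m = n + 1 ≥ 3`, let
`J` have diagonal `A i`, entries `J i (i+1) = J (i+1) i = B i` (indices `0 ≤ i ≤ m-2`),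
corner entries `J 0 (m-1) = J (m-1) 0 = B (m-1)`, and zeros elsewhere, with `B i < 0`
for all `i`. If `J` is positive semidefinite, then the matrix obtained by deleting the
`0`-th row and column is positive definite. -/
theorem stmt_5 (n : ℕ) (hn : 2 ≤ n) (A B : Fin (n + 1) → ℝ) (hB : ∀ i, B i < 0)
    (J : Matrix (Fin (n + 1)) (Fin (n + 1)) ℝ)
    (hJ : ∀ i j : Fin (n + 1), J i j =
      if i = j then A i
      else if (i.val + 1) % (n + 1) = j.val then B i
      else if (j.val + 1) % (n + 1) = i.val then B j
      else 0)
    (hpsd : J.PosSemidef) :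
    (J.submatrix Fin.succ Fin.succ).PosDef :=
  stmt_5_general n A B hB J hJ hpsd
end

section
/- Let F : ℝ → ℝ be four times continuously differentiable on a neighborhood of x*, let S = sup of |F''''| on that neighborhood be finite, and let M > S/24. Suppose x* is a local minimum of F and F(x* + h) − F(x*) ≥ M·h⁴ for all h sufficiently small. Then F''(x*) > 0, i.e. x* is a nondegenerate minimum. -/
/-!
Adding the fourth-order Taylor expansions of `F` at `x₀ + t` and `x₀ - t` cancels the odd-order
terms, so `F (x₀ + t) + F (x₀ - t) - 2 F x₀ ≤ F'' x₀ t² + S t⁴ / 12`. The quartic growth bounds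
the left side below by `2 M t⁴`, and `2 M > S / 12` then forces `F'' x₀ t² > 0`.
-/

open Set Filter Topology
open scoped Nat

theorem taylorWithinEval_uIcc_eq_sum_iteratedDeriv {f : ℝ → ℝ} {x₀ x : ℝ} {n : ℕ}
    (hx : x₀ ≠ x) (hf : ContDiffAt ℝ n f x₀) :
    taylorWithinEval f n (uIcc x₀ x) x₀ x =
      ∑ k ∈ Finset.range (n + 1), iteratedDeriv k f x₀ / k ! * (x - x₀) ^ k := by
  rw [taylor_within_apply]
  refine Finset.sum_congr rfl fun k hk => ?_
  rw [iteratedDerivWithin_eq_iteratedDeriv (uniqueDiffOn_uIcc hx)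
    (hf.of_le (by exact_mod_cast Finset.mem_range_succ_iff.1 hk)) left_mem_uIcc, smul_eq_mul]
  ring

theorem exists_taylor_lagrange_of_mem_nhds {f : ℝ → ℝ} {U : Set ℝ} {x₀ x : ℝ} {n : ℕ}
    (hf : ContDiffOn ℝ (n + 1) f U) (hU : U ∈ 𝓝 x₀) (hx : x₀ ≠ x) (hsub : uIcc x₀ x ⊆ U) :
    ∃ ξ ∈ uIoo x₀ x, f x = ∑ k ∈ Finset.range (n + 1), iteratedDeriv k f x₀ / k ! * (x - x₀) ^ k +
      iteratedDeriv (n + 1) f ξ * (x - x₀) ^ (n + 1) / (n + 1)! := by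
  obtain ⟨ξ, hξ, h⟩ := taylor_mean_remainder_lagrange_iteratedDeriv hx (hf.mono hsub)
  refine ⟨ξ, hξ, ?_⟩
  have hx₀ : ContDiffAt ℝ n f x₀ := (hf.contDiffAt hU).of_le (by norm_cast; omega)
  rw [← taylorWithinEval_uIcc_eq_sum_iteratedDeriv hx hx₀, ← h]
  ring

theorem exists_quartic_taylor {F : ℝ → ℝ} {U : Set ℝ} {x₀ h : ℝ}
    (hF : ContDiffOn ℝ 4 F U) (hU : U ∈ 𝓝 x₀) (hh : h ≠ 0) (hsub : uIcc x₀ (x₀ + h) ⊆ U) :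
    ∃ ξ ∈ U, F (x₀ + h) = F x₀ + deriv F x₀ * h + iteratedDeriv 2 F x₀ / 2 * h ^ 2 +
      iteratedDeriv 3 F x₀ / 6 * h ^ 3 + iteratedDeriv 4 F ξ * h ^ 4 / 24 := by
  obtain ⟨ξ, hξ, hTaylor⟩ := exists_taylor_lagrange_of_mem_nhds (n := 3) hF hU
    (by simpa using hh) hsub
  refine ⟨ξ, hsub (uIoo_subset_uIcc_self hξ), ?_⟩
  simp only [Finset.sum_range_succ, Finset.sum_range_zero, add_sub_cancel_left] at hTaylor
  simpa [Nat.factorial, iteratedDeriv_one] using hTaylor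

theorem second_difference_le {F : ℝ → ℝ} {U : Set ℝ} {x₀ h S : ℝ} (hU : IsOpen U)
    (hF : ContDiffOn ℝ 4 F U) (hS : ∀ x ∈ U, |iteratedDeriv 4 F x| ≤ S) (hh : 0 < h)
    (hsub : Icc (x₀ - h) (x₀ + h) ⊆ U) :
    F (x₀ + h) + F (x₀ - h) - 2 * F x₀ ≤ iteratedDeriv 2 F x₀ * h ^ 2 + S / 12 * h ^ 4 := by
  have hx₀ : U ∈ 𝓝 x₀ := hU.mem_nhds (hsub ⟨by linarith, by linarith⟩)
  obtain ⟨ξ, hξ, hplus⟩ := exists_quartic_taylor hF hx₀ hh.ne'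
    ((uIcc_subset_Icc (by constructor <;> linarith) (by constructor <;> linarith)).trans hsub)
  obtain ⟨η, hη, hminus⟩ := exists_quartic_taylor hF hx₀ (neg_ne_zero.2 hh.ne')
    ((uIcc_subset_Icc (by constructor <;> linarith) (by constructor <;> linarith)).trans hsub)
  rw [← sub_eq_add_neg] at hminus
  have h4 : 0 ≤ h ^ 4 := by positivity
  nlinarith [(abs_le.1 (hS ξ hξ)).2, (abs_le.1 (hS η hη)).2]

theorem stmt_9_general (F : ℝ → ℝ) (x₀ S M : ℝ) (U : Set ℝ) (hUopen : IsOpen U) (hx₀ : x₀ ∈ U)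
    (hC4 : ContDiffOn ℝ 4 F U)
    (hS : ∀ x ∈ U, |iteratedDeriv 4 F x| ≤ S)
    (hM : S / 24 < M)
    (hgrow : ∀ᶠ h in nhds (0 : ℝ), M * h ^ 4 ≤ F (x₀ + h) - F x₀) :
    0 < iteratedDeriv 2 F x₀ := by
  obtain ⟨ε, hε, hball⟩ := Metric.nhds_basis_closedBall.mem_iff.1 (hUopen.mem_nhds hx₀)
  have hneg : Tendsto (fun h : ℝ => -h) (𝓝 0) (𝓝 0) := by simpa using tendsto_neg (0 : ℝ)
  have hgrow' : ∀ᶠ h in 𝓝 (0 : ℝ), M * h ^ 4 ≤ F (x₀ - h) - F x₀ :=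
    (hneg.eventually hgrow).mono fun h hh => by
      simpa [sub_eq_add_neg, Even.neg_pow (by decide : Even 4)] using hh
  obtain ⟨t, ht, htε, hplus, hminus⟩ : ∃ t, 0 < t ∧ t ≤ ε ∧
      M * t ^ 4 ≤ F (x₀ + t) - F x₀ ∧ M * t ^ 4 ≤ F (x₀ - t) - F x₀ := by
    have hsmall : ∀ᶠ t in 𝓝[>] (0 : ℝ), 0 < t ∧ t ≤ ε ∧
        M * t ^ 4 ≤ F (x₀ + t) - F x₀ ∧ M * t ^ 4 ≤ F (x₀ - t) - F x₀ := by
      filter_upwards [self_mem_nhdsWithin, Ioc_mem_nhdsGT hε,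
        nhdsWithin_le_nhds (hgrow.and hgrow')] with t ht htε hgr
      exact ⟨ht, htε.2, hgr⟩
    exact hsmall.exists
  have hsub : Icc (x₀ - t) (x₀ + t) ⊆ U := by
    rw [← Real.closedBall_eq_Icc]; exact (Metric.closedBall_subset_closedBall htε).trans hball
  have hsecond := second_difference_le hUopen hC4 hS ht hsub
  have : 0 < iteratedDeriv 2 F x₀ * t ^ 2 := by nlinarith [pow_pos ht 4]
  exact pos_of_mul_pos_left this (by positivity)

/-- Nondegeneracy criterion (formula (3.6)): if `F` is `C⁴` on an open neighborhood `U`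
of `x₀`, `|F⁗| ≤ S` on `U`, `M > S / 24`, `x₀` is a local minimum of `F` and
`F (x₀ + h) - F x₀ ≥ M h⁴` for all sufficiently small `h`, then `F'' x₀ > 0`. -/
theorem stmt_9 (F : ℝ → ℝ) (x₀ S M : ℝ) (U : Set ℝ) (hUopen : IsOpen U) (hx₀ : x₀ ∈ U)
    (hC4 : ContDiffOn ℝ 4 F U)
    (hS : ∀ x ∈ U, |iteratedDeriv 4 F x| ≤ S)
    (hM : S / 24 < M)
    (hmin : IsLocalMin F x₀)
    (hgrow : ∀ᶠ h in nhds (0 : ℝ), M * h ^ 4 ≤ F (x₀ + h) - F x₀) :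
    0 < iteratedDeriv 2 F x₀ :=
  stmt_9_general F x₀ S M U hUopen hx₀ hC4 hS hM hgrow
end
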